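/- arXiv:1604.06785 — 5 statements merged into one kernel-verified Lean document; each statement's English description precedes it below -/
import Mathlib

section
/- Let W₁, W₂ be positive semidefinite n×n Hermitian matrices and R a positive semidefinite matrix with trace at most P_T. Define C(R) = ln det(I + W₁R) - ln det(I + W₂R) and C_w(R) = ln det(I + W₁R) - tr(W₂R). Then C_w(R) ≤ C(R) ≤ C_w(R) + (1/2)·∑ᵢ λᵢ(W₂R)², where λᵢ(W₂R) are the (nonnegative) eigenvalues of W₂R. -/
/-!
Both bounds are statements about the eigenvalues `μᵢ ≥ 0` of `W₂R`: the characteristic polynomial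
gives `tr(W₂R) = ∑ μᵢ` and `det(I + W₂R) = ∏ (1 + μᵢ)`, so `C(R) - C_w(R) = ∑ (μᵢ - ln(1 + μᵢ))`,
and each summand lies between `0` and `μᵢ² / 2` by the scalar inequalities
`x - x² / 2 ≤ ln(1 + x) ≤ x` for `x ≥ 0`.
-/

open Matrix Polynomial
open scoped ComplexOrder

namespace Real

theorem sub_log_one_add_le_sq_div_two {x : ℝ} (hx : 0 ≤ x) : x - log (1 + x) ≤ x ^ 2 / 2 := by
  have hquadratic : x - x ^ 2 / 2 ≤ 2 * x / (x + 2) := by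
    rw [le_div_iff₀ (by positivity)]
    nlinarith [pow_nonneg hx 3]
  linarith [le_log_one_add_of_nonneg hx]

end Real

namespace Matrix

variable {ι R : Type*} [Fintype ι] [DecidableEq ι] [CommRing R] {A : Matrix ι ι R} {μ : ι → R}

theorem trace_eq_sum_of_charpoly_eq_prod (h : A.charpoly = ∏ i, (X - C (μ i))) :
    A.trace = ∑ i, μ i := by
  rw [trace_eq_neg_charpoly_nextCoeff, h, prod_X_sub_C_nextCoeff, neg_neg]

theorem det_one_add_eq_prod_of_charpoly_eq_prod (h : A.charpoly = ∏ i, (X - C (μ i))) :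
    (1 + A).det = ∏ i, (1 + μ i) := by
  have hsign : IsUnit ((-1 : R) ^ Fintype.card ι) := isUnit_neg_one.pow _
  -- `charpoly A` evaluated at `-1` is `det (-1 - A) = (-1) ^ card ι * det (1 + A)`
  apply hsign.mul_left_cancel
  have h_eval := congrArg (eval (-1)) h
  rw [eval_charpoly, eval_prod] at h_eval
  simp only [eval_sub, eval_X, eval_C] at h_eval
  rw [← det_neg, ← Finset.card_univ, ← Finset.prod_const, ← Finset.prod_mul_distrib]
  convert h_eval using 2
  · rw [map_neg, map_one, neg_add']
  · ring

end Matrix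

theorem weak_eavesdropper_rate_bounds_general {n : ℕ}
    (W₁ W₂ R : Matrix (Fin n) (Fin n) ℂ)
    (μ : Fin n → ℝ) (hμnn : ∀ i, 0 ≤ μ i)
    (hμ : (W₂ * R).charpoly = ∏ i, (X - C (μ i : ℂ))) :
    (Real.log ((1 + W₁ * R).det.re) - ((W₂ * R).trace).re
        ≤ Real.log ((1 + W₁ * R).det.re) - Real.log ((1 + W₂ * R).det.re)) ∧
    (Real.log ((1 + W₁ * R).det.re) - Real.log ((1 + W₂ * R).det.re)
        ≤ Real.log ((1 + W₁ * R).det.re) - ((W₂ * R).trace).re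
            + (1 / 2) * ∑ i, (μ i) ^ 2) := by
  have htrace : ((W₂ * R).trace).re = ∑ i, μ i := by
    rw [trace_eq_sum_of_charpoly_eq_prod hμ, ← Complex.ofReal_sum, Complex.ofReal_re]
  have hlogdet : Real.log ((1 + W₂ * R).det.re) = ∑ i, Real.log (1 + μ i) := by
    rw [det_one_add_eq_prod_of_charpoly_eq_prod hμ]
    norm_cast
    rw [Real.log_prod fun i _ => by linarith [hμnn i]]
  rw [htrace, hlogdet]
  constructor
  · have hlog_le : ∑ i, Real.log (1 + μ i) ≤ ∑ i, μ i :=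
      Finset.sum_le_sum fun i _ => by
        linarith [Real.log_le_sub_one_of_pos (by linarith [hμnn i] : 0 < 1 + μ i)]
    linarith
  · have hgap : ∑ i, (μ i - Real.log (1 + μ i)) ≤ ∑ i, μ i ^ 2 / 2 :=
      Finset.sum_le_sum fun i _ => Real.sub_log_one_add_le_sq_div_two (hμnn i)
    rw [Finset.sum_sub_distrib, ← Finset.sum_div] at hgap
    linarith

theorem weak_eavesdropper_rate_bounds {n : ℕ}
    (W₁ W₂ R : Matrix (Fin n) (Fin n) ℂ) (P_T : ℝ)
    (hW₁ : W₁.PosSemidef) (hW₂ : W₂.PosSemidef) (hR : R.PosSemidef)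
    (htr : (R.trace).re ≤ P_T)
    (μ : Fin n → ℝ) (hμnn : ∀ i, 0 ≤ μ i)
    (hμ : (W₂ * R).charpoly = ∏ i, (X - C (μ i : ℂ))) :
    (Real.log ((1 + W₁ * R).det.re) - ((W₂ * R).trace).re
        ≤ Real.log ((1 + W₁ * R).det.re) - Real.log ((1 + W₂ * R).det.re)) ∧
    (Real.log ((1 + W₁ * R).det.re) - Real.log ((1 + W₂ * R).det.re)
        ≤ Real.log ((1 + W₁ * R).det.re) - ((W₂ * R).trace).re
            + (1 / 2) * ∑ i, (μ i) ^ 2) :=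
  weak_eavesdropper_rate_bounds_general W₁ W₂ R μ hμnn hμ
end

section
/- Let W₁, W₂ ⪰ 0 be Hermitian n×n matrices, P_T > 0, and let C_s = max over R ⪰ 0 with tr R ≤ P_T of [ln det(I+W₁R) - ln det(I+W₂R)], and C_w = max over the same set of [ln det(I+W₁R) - tr(W₂R)]. Then C_w ≤ C_s ≤ C_w + (P_T²/2)·λ₁(W₂)², where λ₁(W₂) is the largest eigenvalue of W₂. -/
open Matrix
open scoped ComplexOrder

/-!
Put `S = W₂^{1/2} R W₂^{1/2} ⪰ 0`. By Sylvester's determinant identity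
`det (I + W₂ R) = det (I + S)`, and `tr (W₂ R) = tr S`, so in terms of the eigenvalues `sᵢ ≥ 0`
of `S` the gap between the two objectives is
`tr (W₂ R) - ln det (I + W₂ R) = ∑ (sᵢ - ln (1 + sᵢ))`, which lies between `0` and
`∑ sᵢ² / 2 ≤ (tr S)² / 2`. Finally `tr (W₂ R) ≤ λ₁(W₂) tr R ≤ λ₁(W₂) P_T`, because
`λ₁(W₂) I - W₂ ⪰ 0` and the trace of a product of positive semidefinite matrices is nonnegative.
-/

theorem Real.sub_log_one_add_le_sq_div_two_s3 {x : ℝ} (hx : 0 ≤ x) :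
    x - Real.log (1 + x) ≤ x ^ 2 / 2 := by
  have hx2 : 0 < x + 2 := by linarith
  calc x - Real.log (1 + x) ≤ x - 2 * x / (x + 2) := by
        linarith [Real.le_log_one_add_of_nonneg hx]
    _ = x ^ 2 / (x + 2) := by field_simp; ring
    _ ≤ x ^ 2 / 2 := by gcongr; linarith

namespace Matrix

variable {𝕜 m : Type*} [RCLike 𝕜] [Fintype m] [DecidableEq m]

theorem IsHermitian.det_one_add {A : Matrix m m 𝕜} (hA : A.IsHermitian) :
    (1 + A).det = ∏ i, ((1 + hA.eigenvalues i : ℝ) : 𝕜) := by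
  conv_lhs => rw [hA.spectral_theorem,
    ← map_one (Unitary.conjStarAlgAut 𝕜 _ hA.eigenvectorUnitary), ← map_add, det_map,
    ← diagonal_one, diagonal_add, det_diagonal]
  simp

theorem IsHermitian.re_trace_eq_sum_eigenvalues {A : Matrix m m 𝕜} (hA : A.IsHermitian) :
    RCLike.re A.trace = ∑ i, hA.eigenvalues i := by
  simp [hA.trace_eq_sum_eigenvalues]

theorem PosSemidef.log_re_det_one_add_eq_sum {A : Matrix m m 𝕜} (hA : A.PosSemidef) :
    Real.log (RCLike.re (1 + A).det) = ∑ i, Real.log (1 + hA.1.eigenvalues i) := by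
  rw [hA.1.det_one_add, ← RCLike.ofReal_prod, RCLike.ofReal_re,
    Real.log_prod fun i _ => by linarith [hA.eigenvalues_nonneg i]]

theorem PosSemidef.log_re_det_one_add_le_re_trace {A : Matrix m m 𝕜} (hA : A.PosSemidef) :
    Real.log (RCLike.re (1 + A).det) ≤ RCLike.re A.trace := by
  rw [hA.log_re_det_one_add_eq_sum, hA.1.re_trace_eq_sum_eigenvalues]
  gcongr with i
  linarith [Real.log_le_sub_one_of_pos (by linarith [hA.eigenvalues_nonneg i] :
    0 < 1 + hA.1.eigenvalues i)]

theorem PosSemidef.re_trace_sub_log_re_det_one_add_le {A : Matrix m m 𝕜} (hA : A.PosSemidef) :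
    RCLike.re A.trace - Real.log (RCLike.re (1 + A).det) ≤ RCLike.re A.trace ^ 2 / 2 := by
  rw [hA.log_re_det_one_add_eq_sum, hA.1.re_trace_eq_sum_eigenvalues, ← Finset.sum_sub_distrib]
  calc ∑ i, (hA.1.eigenvalues i - Real.log (1 + hA.1.eigenvalues i))
      ≤ ∑ i, hA.1.eigenvalues i ^ 2 / 2 :=
        Finset.sum_le_sum fun i _ => Real.sub_log_one_add_le_sq_div_two_s3 (hA.eigenvalues_nonneg i)
    _ ≤ (∑ i, hA.1.eigenvalues i) ^ 2 / 2 := by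
        rw [← Finset.sum_div]
        gcongr
        exact Finset.sum_sq_le_sq_sum_of_nonneg fun i _ => hA.eigenvalues_nonneg i

section SqrtConj

open scoped MatrixOrder

theorem PosSemidef.sqrt_mul_mul_sqrt (W : Matrix m m 𝕜) {R : Matrix m m 𝕜} (hR : R.PosSemidef) :
    (CFC.sqrt W * R * CFC.sqrt W).PosSemidef := by
  simpa [(CFC.sqrt_nonneg W).posSemidef.1.eq] using hR.mul_mul_conjTranspose_same (CFC.sqrt W)

theorem PosSemidef.trace_mul_eq_trace_sqrt_mul_mul_sqrt {W : Matrix m m 𝕜} (hW : W.PosSemidef)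
    (R : Matrix m m 𝕜) : (W * R).trace = (CFC.sqrt W * R * CFC.sqrt W).trace := by
  rw [trace_mul_comm _ (CFC.sqrt W), ← mul_assoc, CFC.sqrt_mul_sqrt_self W hW.nonneg]

theorem PosSemidef.det_one_add_mul_eq_det_one_add_sqrt_mul_mul_sqrt {W : Matrix m m 𝕜}
    (hW : W.PosSemidef) (R : Matrix m m 𝕜) :
    (1 + W * R).det = (1 + CFC.sqrt W * R * CFC.sqrt W).det := by
  conv_lhs => rw [← CFC.sqrt_mul_sqrt_self W hW.nonneg, mul_assoc, det_one_add_mul_comm]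

theorem PosSemidef.trace_mul_nonneg {P R : Matrix m m 𝕜} (hP : P.PosSemidef)
    (hR : R.PosSemidef) : 0 ≤ (P * R).trace := by
  rw [hP.trace_mul_eq_trace_sqrt_mul_mul_sqrt]
  exact (PosSemidef.sqrt_mul_mul_sqrt P hR).trace_nonneg

theorem IsHermitian.re_trace_mul_le {W R : Matrix m m 𝕜} (hW : W.IsHermitian)
    (hR : R.PosSemidef) {c : ℝ} (hc : ∀ i, hW.eigenvalues i ≤ c) :
    RCLike.re (W * R).trace ≤ c * RCLike.re R.trace := by
  have hWc : W ≤ algebraMap ℝ _ c :=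
    le_algebraMap_of_spectrum_le (by
      rw [hW.spectrum_real_eq_range_eigenvalues]
      rintro _ ⟨i, rfl⟩
      exact hc i) hW.isSelfAdjoint
  have := (RCLike.nonneg_iff.mp ((le_iff.mp hWc).trace_mul_nonneg hR)).1
  rw [sub_mul, trace_sub, Algebra.algebraMap_eq_smul_one, smul_mul, one_mul, trace_smul] at this
  simpa [RCLike.smul_re] using this

theorem PosSemidef.log_re_det_one_add_mul_le_re_trace_mul {W R : Matrix m m 𝕜}
    (hW : W.PosSemidef) (hR : R.PosSemidef) :
    Real.log (RCLike.re (1 + W * R).det) ≤ RCLike.re (W * R).trace := by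
  rw [hW.det_one_add_mul_eq_det_one_add_sqrt_mul_mul_sqrt, hW.trace_mul_eq_trace_sqrt_mul_mul_sqrt]
  exact (PosSemidef.sqrt_mul_mul_sqrt W hR).log_re_det_one_add_le_re_trace

theorem PosSemidef.re_trace_mul_sub_log_re_det_one_add_mul_le {W R : Matrix m m 𝕜}
    (hW : W.PosSemidef) (hR : R.PosSemidef) :
    RCLike.re (W * R).trace - Real.log (RCLike.re (1 + W * R).det) ≤
      RCLike.re (W * R).trace ^ 2 / 2 := by
  rw [hW.det_one_add_mul_eq_det_one_add_sqrt_mul_mul_sqrt, hW.trace_mul_eq_trace_sqrt_mul_mul_sqrt]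
  exact (PosSemidef.sqrt_mul_mul_sqrt W hR).re_trace_sub_log_re_det_one_add_le

end SqrtConj

end Matrix

theorem secrecy_capacity_weak_eavesdropper_bounds_general {n : ℕ}
    (W₁ W₂ : Matrix (Fin n) (Fin n) ℂ) (P_T : ℝ)
    (hW₂ : W₂.PosSemidef)
    (C_s C_w lam₁ : ℝ)
    (hlam₁ : IsGreatest (Set.range hW₂.1.eigenvalues) lam₁)
    (hCs : IsGreatest {c : ℝ | ∃ R : Matrix (Fin n) (Fin n) ℂ,
        R.PosSemidef ∧ (R.trace).re ≤ P_T ∧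
        c = Real.log ((1 + W₁ * R).det.re) - Real.log ((1 + W₂ * R).det.re)} C_s)
    (hCw : IsGreatest {c : ℝ | ∃ R : Matrix (Fin n) (Fin n) ℂ,
        R.PosSemidef ∧ (R.trace).re ≤ P_T ∧
        c = Real.log ((1 + W₁ * R).det.re) - ((W₂ * R).trace).re} C_w) :
    C_w ≤ C_s ∧ C_s ≤ C_w + P_T ^ 2 / 2 * lam₁ ^ 2 := by
  obtain ⟨i₀, hi₀⟩ := hlam₁.1
  have hlam₁_nonneg : 0 ≤ lam₁ := hi₀ ▸ hW₂.eigenvalues_nonneg i₀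
  constructor
  · obtain ⟨R, hR, hRP, rfl⟩ := hCw.1
    have hlog_le := hW₂.log_re_det_one_add_mul_le_re_trace_mul hR
    have hCs_ge := hCs.2 ⟨R, hR, hRP, rfl⟩
    simp only [RCLike.re_to_complex] at hlog_le
    linarith
  · obtain ⟨R, hR, hRP, rfl⟩ := hCs.1
    have hgap := hW₂.re_trace_mul_sub_log_re_det_one_add_mul_le hR
    have htr_nonneg := (RCLike.nonneg_iff.mp (hW₂.trace_mul_nonneg hR)).1
    have htr_le := hW₂.1.re_trace_mul_le hR fun i => hlam₁.2 ⟨i, rfl⟩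
    have hCw_ge := hCw.2 ⟨R, hR, hRP, rfl⟩
    simp only [RCLike.re_to_complex] at hgap htr_nonneg htr_le
    have htr_sq : ((W₂ * R).trace.re) ^ 2 ≤ (lam₁ * P_T) ^ 2 := by
      gcongr
      exact htr_le.trans (mul_le_mul_of_nonneg_left hRP hlam₁_nonneg)
    linarith

theorem secrecy_capacity_weak_eavesdropper_bounds {n : ℕ}
    (W₁ W₂ : Matrix (Fin n) (Fin n) ℂ) (P_T : ℝ) (hP : 0 < P_T)
    (hW₁ : W₁.PosSemidef) (hW₂ : W₂.PosSemidef)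
    (C_s C_w lam₁ : ℝ)
    (hlam₁ : IsGreatest (Set.range hW₂.1.eigenvalues) lam₁)
    (hCs : IsGreatest {c : ℝ | ∃ R : Matrix (Fin n) (Fin n) ℂ,
        R.PosSemidef ∧ (R.trace).re ≤ P_T ∧
        c = Real.log ((1 + W₁ * R).det.re) - Real.log ((1 + W₂ * R).det.re)} C_s)
    (hCw : IsGreatest {c : ℝ | ∃ R : Matrix (Fin n) (Fin n) ℂ,
        R.PosSemidef ∧ (R.trace).re ≤ P_T ∧
        c = Real.log ((1 + W₁ * R).det.re) - ((W₂ * R).trace).re} C_w) :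
    C_w ≤ C_s ∧ C_s ≤ C_w + P_T ^ 2 / 2 * lam₁ ^ 2 :=
  secrecy_capacity_weak_eavesdropper_bounds_general W₁ W₂ P_T hW₂ C_s C_w lam₁ hlam₁ hCs hCw
end

section
/- Fix ε > 0 and λ > 0, and define p(g) = ((ε+g)/(2εg))·(√(1 + (4εg/(ε+g)²)·max((g-ε)/λ - 1, 0)) - 1) for g > 0. Then p(g) > 0 if and only if g > ε + λ, and p is nondecreasing in g. -/
/-!
`p(g)` is the nonnegative root `x` of `ε g x² + (ε + g) x = max ((g - ε) / λ - 1) 0`, so it is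
positive exactly when the right-hand side is, i.e. when `g > ε + λ`. On these active modes the
quadratic, solved for `g`, reads `g (1 - λ (ε p + 1) p) = λ (ε p + 1) + ε`: a larger `p` gives a
larger right-hand side and a smaller positive factor on the left, hence a larger `g`. So `p`
cannot decrease as `g` grows.
-/

open Set

noncomputable def quadPosRoot (a b c : ℝ) : ℝ :=
  b / (2 * a) * (√(1 + 4 * a * c / b ^ 2) - 1)

theorem quadPosRoot_nonneg {a b c : ℝ} (ha : 0 ≤ a) (hb : 0 ≤ b) (hc : 0 ≤ c) :
    0 ≤ quadPosRoot a b c := by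
  have hs : 1 ≤ √(1 + 4 * a * c / b ^ 2) :=
    Real.one_le_sqrt.mpr (le_add_of_nonneg_right (by positivity))
  exact mul_nonneg (by positivity) (sub_nonneg.mpr hs)

theorem quadPosRoot_spec {a b c : ℝ} (ha : a ≠ 0) (hb : b ≠ 0)
    (hD : 0 ≤ 1 + 4 * a * c / b ^ 2) :
    a * quadPosRoot a b c ^ 2 + b * quadPosRoot a b c = c := by
  have hs := Real.sq_sqrt hD
  unfold quadPosRoot
  field_simp at hs ⊢
  linear_combination hs

theorem quadPosRoot_pos_iff {a b c : ℝ} (ha : 0 < a) (hb : 0 < b) (hc : 0 ≤ c) :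
    0 < quadPosRoot a b c ↔ 0 < c := by
  have hspec := quadPosRoot_spec ha.ne' hb.ne' (by positivity : 0 ≤ 1 + 4 * a * c / b ^ 2)
  constructor
  · intro hx
    rw [← hspec]
    positivity
  · intro hc'
    refine (quadPosRoot_nonneg ha.le hb.le hc).lt_of_ne fun h0 => ?_
    rw [← h0] at hspec
    linarith

noncomputable def powerAllocation (ε lam g : ℝ) : ℝ :=
  ((ε + g) / (2 * ε * g)) *
    (Real.sqrt (1 + (4 * ε * g / (ε + g) ^ 2) * max ((g - ε) / lam - 1) 0) - 1)

section PowerAllocation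

variable {ε lam g : ℝ}

theorem powerAllocation_eq_quadPosRoot (ε lam g : ℝ) :
    powerAllocation ε lam g = quadPosRoot (ε * g) (ε + g) (max ((g - ε) / lam - 1) 0) := by
  unfold powerAllocation quadPosRoot
  ring_nf

theorem powerAllocation_nonneg (hε : 0 ≤ ε) (hg : 0 ≤ g) : 0 ≤ powerAllocation ε lam g := by
  rw [powerAllocation_eq_quadPosRoot]
  exact quadPosRoot_nonneg (by positivity) (by positivity) (le_max_right _ _)

theorem powerAllocation_pos_iff (hε : 0 < ε) (hlam : 0 < lam) (hg : 0 < g) :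
    0 < powerAllocation ε lam g ↔ ε + lam < g := by
  rw [powerAllocation_eq_quadPosRoot,
    quadPosRoot_pos_iff (by positivity) (by positivity) (le_max_right _ _), lt_max_iff,
    lt_self_iff_false, or_false, sub_pos, one_lt_div hlam, lt_sub_iff_add_lt']

theorem powerAllocation_inverse_eq (hε : 0 < ε) (hlam : 0 < lam) (hg : ε + lam < g) :
    g * (1 - lam * (ε * powerAllocation ε lam g + 1) * powerAllocation ε lam g) =
      lam * (ε * powerAllocation ε lam g + 1) + ε := by
  have hg₀ : 0 < g := by linarith
  have hM : max ((g - ε) / lam - 1) 0 = (g - ε) / lam - 1 :=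
    max_eq_left (sub_nonneg.mpr ((one_le_div hlam).mpr (by linarith)))
  have hspec := quadPosRoot_spec (mul_pos hε hg₀).ne' (by positivity : ε + g ≠ 0)
    (by positivity : 0 ≤ 1 + 4 * (ε * g) * max ((g - ε) / lam - 1) 0 / (ε + g) ^ 2)
  rw [← powerAllocation_eq_quadPosRoot, hM] at hspec
  field_simp at hspec
  linear_combination -hspec

theorem powerAllocation_monotoneOn (hε : 0 < ε) (hlam : 0 < lam) :
    MonotoneOn (powerAllocation ε lam) (Ioi 0) := by
  intro g₁ hg₁ g₂ hg₂ h12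
  by_contra! hlt
  set p₁ := powerAllocation ε lam g₁
  set p₂ := powerAllocation ε lam g₂
  have hp₂ : 0 ≤ p₂ := powerAllocation_nonneg hε.le (le_of_lt hg₂)
  have hact₁ : ε + lam < g₁ := (powerAllocation_pos_iff hε hlam hg₁).mp (hp₂.trans_lt hlt)
  have hact₂ : ε + lam < g₂ := hact₁.trans_le h12
  have e₁ := powerAllocation_inverse_eq hε hlam hact₁
  have e₂ := powerAllocation_inverse_eq hε hlam hact₂
  have hd₂ : 0 < 1 - lam * (ε * p₂ + 1) * p₂ := by
    refine pos_of_mul_pos_right ?_ (le_of_lt hg₂)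
    rw [e₂]
    positivity
  have hd : 1 - lam * (ε * p₁ + 1) * p₁ < 1 - lam * (ε * p₂ + 1) * p₂ := by
    gcongr
  have hr : lam * (ε * p₂ + 1) + ε < lam * (ε * p₁ + 1) + ε := by
    gcongr
  have := calc
    g₁ * (1 - lam * (ε * p₁ + 1) * p₁) < g₁ * (1 - lam * (ε * p₂ + 1) * p₂) :=
        mul_lt_mul_of_pos_left hd hg₁
    _ ≤ g₂ * (1 - lam * (ε * p₂ + 1) * p₂) := mul_le_mul_of_nonneg_right h12 hd₂.le
    _ = lam * (ε * p₂ + 1) + ε := e₂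
    _ < lam * (ε * p₁ + 1) + ε := hr
  linarith

end PowerAllocation

theorem power_allocation_active_modes (ε lam : ℝ) (hε : 0 < ε) (hlam : 0 < lam) :
    (∀ g : ℝ, 0 < g →
      (0 < ((ε + g) / (2 * ε * g)) *
          (Real.sqrt (1 + (4 * ε * g / (ε + g) ^ 2) * max ((g - ε) / lam - 1) 0) - 1)
        ↔ ε + lam < g)) ∧
    MonotoneOn (fun g : ℝ =>
        ((ε + g) / (2 * ε * g)) *
          (Real.sqrt (1 + (4 * ε * g / (ε + g) ^ 2) * max ((g - ε) / lam - 1) 0) - 1))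
      (Set.Ioi 0) :=
  ⟨fun _ hg => powerAllocation_pos_iff hε hlam hg, powerAllocation_monotoneOn hε hlam⟩
end

section
/- For positive reals g and ε with g > ε, the expression ((ε+g)/(2εg))·(√(1 + (4εg/(ε+g)²)·((g-ε)/λ - 1)) - 1) with λ satisfying √λ = β/P_T, β = √(1/ε - 1/g), converges, as P_T → ∞, to P_T·√(1/ε - 1/g)/β·(1+o(1)); in particular, for a single mode (β = √(1/ε - 1/g)), the allocated power is asymptotically P_T. -/
/-!
Since `(g - ε) / (β² / P²) = (g - ε) P² / β²`, the radicand is `a P² + (1 - c)` with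
`c = 4εg / (ε + g)²` and `a = c (g - ε) / β²`, so the allocated power grows like `√a · P`.
The constant `√a` is exactly `2εg √(1/ε - 1/g) / ((ε + g) β)`, which cancels the normalisation.
-/

open Filter Topology

lemma tendsto_sqrt_mul_sq_add_sub_div_atTop (a b c : ℝ) :
    Tendsto (fun x : ℝ => (√(a * x ^ 2 + b) - c) / x) atTop (𝓝 √a) := by
  have hsqrt : Tendsto (fun x : ℝ => √(a + b / x ^ 2)) atTop (𝓝 √a) := by
    have hrad : Tendsto (fun x : ℝ => a + b / x ^ 2) atTop (𝓝 a) := by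
      simpa using tendsto_const_nhds.add
        (tendsto_const_nhds.div_atTop (tendsto_pow_atTop (α := ℝ) two_ne_zero))
    exact (Real.continuous_sqrt.tendsto a).comp hrad
  have hconst : Tendsto (fun x : ℝ => c / x) atTop (𝓝 0) :=
    tendsto_const_nhds.div_atTop tendsto_id
  have hdiff : Tendsto (fun x : ℝ => √(a + b / x ^ 2) - c / x) atTop (𝓝 √a) := by
    simpa using hsqrt.sub hconst
  refine hdiff.congr' ?_
  filter_upwards [eventually_gt_atTop 0] with x hx
  have hsplit : a + b / x ^ 2 = (a * x ^ 2 + b) / x ^ 2 := by field_simp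
  rw [hsplit, Real.sqrt_div' _ (by positivity), Real.sqrt_sq hx.le, sub_div]

lemma sqrt_four_mul_div_sq_mul_sub_div_sq {ε g β : ℝ} (hε : 0 < ε) (hg : ε < g) (hβ : 0 < β) :
    √(4 * ε * g / (ε + g) ^ 2 * (g - ε) / β ^ 2)
      = 2 * ε * g * √(1 / ε - 1 / g) / ((ε + g) * β) := by
  have hg0 : 0 < g := hε.trans hg
  have hgap : 0 ≤ 1 / ε - 1 / g := sub_nonneg.mpr (one_div_le_one_div_of_le hε hg.le)
  have hsq : 4 * ε * g / (ε + g) ^ 2 * (g - ε) / β ^ 2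
      = (2 * ε * g * √(1 / ε - 1 / g) / ((ε + g) * β)) ^ 2 := by
    rw [div_pow, mul_pow, mul_pow, Real.sq_sqrt hgap]
    field_simp
    ring
  rw [hsq, Real.sqrt_sq (by positivity)]

theorem high_snr_power_asymptotics (g ε β : ℝ) (hε : 0 < ε) (hg : ε < g) (hβ : 0 < β) :
    Tendsto (fun P_T : ℝ =>
        (((ε + g) / (2 * ε * g)) *
            (Real.sqrt (1 + (4 * ε * g / (ε + g) ^ 2) * ((g - ε) / (β ^ 2 / P_T ^ 2) - 1)) - 1))
          / (P_T * Real.sqrt (1 / ε - 1 / g) / β))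
      atTop (nhds 1) := by
  have hradicand : ∀ P_T : ℝ,
      1 + 4 * ε * g / (ε + g) ^ 2 * ((g - ε) / (β ^ 2 / P_T ^ 2) - 1)
        = 4 * ε * g / (ε + g) ^ 2 * (g - ε) / β ^ 2 * P_T ^ 2 + (1 - 4 * ε * g / (ε + g) ^ 2) := by
    intro P_T
    rw [div_div_eq_mul_div]
    ring
  have hlimit : (ε + g) * β / (2 * ε * g * √(1 / ε - 1 / g))
      * √(4 * ε * g / (ε + g) ^ 2 * (g - ε) / β ^ 2) = 1 := by
    have hg0 : 0 < g := hε.trans hg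
    have hs : 0 < √(1 / ε - 1 / g) :=
      Real.sqrt_pos.mpr (sub_pos.mpr (one_div_lt_one_div_of_lt hε hg))
    rw [sqrt_four_mul_div_sq_mul_sub_div_sq hε hg hβ, div_mul_div_comm,
      div_eq_one_iff_eq (by positivity)]
    ring
  have hscaled := (tendsto_sqrt_mul_sq_add_sub_div_atTop
    (4 * ε * g / (ε + g) ^ 2 * (g - ε) / β ^ 2) (1 - 4 * ε * g / (ε + g) ^ 2) 1).const_mul
    ((ε + g) * β / (2 * ε * g * √(1 / ε - 1 / g)))
  rw [hlimit] at hscaled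
  simp_rw [hradicand]
  refine hscaled.congr fun P_T => ?_
  rw [div_div_eq_mul_div]
  ring
end

section
/- Let Λ₁ = diag(a₁,...,aₙ) with aᵢ > 0, Λ₂ = diag(b₁,...,bₙ) with bᵢ ≥ 0 and bᵢ⁻¹ = aᵢ⁻¹ + α for some fixed α > 0 on all indices with λᵢ > 0, where λᵢ = max(1/λ - 1/aᵢ, 0) for some λ > 0. Then for each i with λᵢ > 0, (1/(aᵢ⁻¹ + λᵢ)) - (1/(bᵢ⁻¹ + λᵢ)) = λ' where λ' = αλ²/(1+αλ) is independent of i. -/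
/-! On an active index water-filling fills `aᵢ⁻¹ + λᵢ` up to the common level `1/λ`, and
`bᵢ⁻¹ = aᵢ⁻¹ + α` puts `bᵢ⁻¹ + λᵢ` at `1/λ + α`; so the difference depends on `λ` and `α` only. -/

lemma max_zero_eq_self_of_pos {R : Type*} [LinearOrder R] [Zero R] {x : R}
    (h : 0 < max x 0) : max x 0 = x :=
  max_eq_left (lt_max_iff.mp h |>.resolve_right (lt_irrefl 0)).le

lemma one_div_inv_sub_one_div_inv_add {K : Type*} [Field K] {α lam : K}
    (hlam : lam ≠ 0) (h : 1 + α * lam ≠ 0) :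
    1 / lam⁻¹ - 1 / (lam⁻¹ + α) = α * lam ^ 2 / (1 + α * lam) := by
  have hsum : lam⁻¹ + α = (1 + α * lam) / lam := by field_simp
  rw [hsum, one_div_div, one_div, inv_inv, eq_div_iff h, sub_mul, div_mul_cancel₀ _ h]
  ring

theorem waterfilling_stationarity_general {n : ℕ} (a b : Fin n → ℝ) (α lam : ℝ)
    (hα : 0 < α) (hlam : 0 < lam)
    (p : Fin n → ℝ) (hp : ∀ i, p i = max (1 / lam - 1 / a i) 0)
    (hrel : ∀ i, 0 < p i → (b i)⁻¹ = (a i)⁻¹ + α) :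
    ∀ i, 0 < p i →
      1 / ((a i)⁻¹ + p i) - 1 / ((b i)⁻¹ + p i) = α * lam ^ 2 / (1 + α * lam) := by
  intro i hpi
  have hactive : p i = lam⁻¹ - (a i)⁻¹ := by
    rw [hp i] at hpi ⊢
    simpa only [one_div] using max_zero_eq_self_of_pos hpi
  have hlevel_a : (a i)⁻¹ + p i = lam⁻¹ := by rw [hactive]; ring
  have hlevel_b : (b i)⁻¹ + p i = lam⁻¹ + α := by rw [hrel i hpi, hactive]; ring
  rw [hlevel_a, hlevel_b]
  exact one_div_inv_sub_one_div_inv_add hlam.ne' (by positivity)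

theorem waterfilling_stationarity {n : ℕ} (a b : Fin n → ℝ) (α lam : ℝ)
    (hα : 0 < α) (hlam : 0 < lam)
    (ha : ∀ i, 0 < a i) (hb : ∀ i, 0 ≤ b i)
    (p : Fin n → ℝ) (hp : ∀ i, p i = max (1 / lam - 1 / a i) 0)
    (hrel : ∀ i, 0 < p i → (b i)⁻¹ = (a i)⁻¹ + α) :
    ∀ i, 0 < p i →
      1 / ((a i)⁻¹ + p i) - 1 / ((b i)⁻¹ + p i) = α * lam ^ 2 / (1 + α * lam) :=
  waterfilling_stationarity_general a b α lam hα hlam p hp hrel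
end
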